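/- Let A and B be disjoint nonempty sets with 0 ∉ A ∪ B, F_1 = F_{ξ1η1}[A] = (A*, R_1) and F_2 = F_{ξ2η2}[B] = (B*, R_2) tree frames. Then Log(N_ω(F_1) × N_ω(F_2)) ⊆ Log(F_1) ⊗ Log(F_2). -/

import Mathlib

set_option autoImplicit false

/-- Modal formulas with `n` modalities (propositional letters indexed by `ℕ`). -/
inductive MFormula (n : ℕ) : Type
  | prop : ℕ → MFormula n
  | bot  : MFormula n
  | imp  : MFormula n → MFormula n → MFormula n
  | box  : Fin n → MFormula n → MFormula n

namespace MFormula

/-- Negation as an abbreviation: ¬φ := φ → ⊥. -/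
def neg {n : ℕ} (φ : MFormula n) : MFormula n := φ.imp .bot

/-- Uniform substitution of formulas for propositional letters. -/
def subst {n : ℕ} (s : ℕ → MFormula n) : MFormula n → MFormula n
  | prop p  => s p
  | bot     => bot
  | imp φ ψ => imp (φ.subst s) (ψ.subst s)
  | box i φ => box i (φ.subst s)

end MFormula

/-- A classical tautology: true under every boolean valuation of formulas
(a valuation respecting `⊥` and `→`, arbitrary on letters and boxed formulas). -/
def IsTautology {n : ℕ} (φ : MFormula n) : Prop :=
  ∀ v : MFormula n → Prop,
    ¬ v .bot → (∀ ψ χ : MFormula n, v (ψ.imp χ) ↔ (v ψ → v χ)) → v φ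

/-- Normal modal logics with `n` modalities. -/
structure IsNormalLogic {n : ℕ} (L : Set (MFormula n)) : Prop where
  taut : ∀ φ : MFormula n, IsTautology φ → φ ∈ L
  kax : ∀ (i : Fin n) (p q : MFormula n),
    ((MFormula.box i (p.imp q)).imp ((MFormula.box i p).imp (MFormula.box i q))) ∈ L
  mp : ∀ φ ψ : MFormula n, φ.imp ψ ∈ L → φ ∈ L → ψ ∈ L
  subst : ∀ (φ : MFormula n) (s : ℕ → MFormula n), φ ∈ L → φ.subst s ∈ L
  nec : ∀ (i : Fin n) (φ : MFormula n), φ ∈ L → MFormula.box i φ ∈ L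

/-- The smallest normal logic containing `Γ`. -/
def NormalClosure {n : ℕ} (Γ : Set (MFormula n)) : Set (MFormula n) :=
  ⋂₀ {L : Set (MFormula n) | IsNormalLogic L ∧ Γ ⊆ L}

/-- The axiom □p → ¬□¬p. -/
def dAx : MFormula 1 :=
  (MFormula.box 0 (.prop 0)).imp (MFormula.neg (MFormula.box 0 (MFormula.neg (.prop 0))))

/-- The axiom □p → p. -/
def tAx : MFormula 1 := (MFormula.box 0 (.prop 0)).imp (.prop 0)

/-- The axiom □p → □□p. -/
def fourAx : MFormula 1 :=
  (MFormula.box 0 (.prop 0)).imp (MFormula.box 0 (MFormula.box 0 (.prop 0)))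

def LogicK : Set (MFormula 1) := NormalClosure ∅
def LogicD : Set (MFormula 1) := NormalClosure (LogicK ∪ {dAx})
def LogicT : Set (MFormula 1) := NormalClosure (LogicK ∪ {tAx})
def LogicD4 : Set (MFormula 1) := NormalClosure (LogicD ∪ {fourAx})
def LogicS4 : Set (MFormula 1) := NormalClosure (LogicT ∪ {fourAx})

/-- Translation of a unimodal formula into the bimodal language, replacing □ by □_i. -/
def trTo (i : Fin 2) : MFormula 1 → MFormula 2
  | .prop p  => .prop p
  | .bot     => .bot
  | .imp φ ψ => .imp (trTo i φ) (trTo i ψ)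
  | .box _ φ => .box i (trTo i φ)

/-- The fusion `L₁ ⊗ L₂` of two unimodal logics: the smallest bimodal normal logic
containing the translation of `L₁` (□ ↦ □₁) and of `L₂` (□ ↦ □₂). -/
def Fusion (L₁ L₂ : Set (MFormula 1)) : Set (MFormula 2) :=
  NormalClosure (trTo 0 '' L₁ ∪ trTo 1 '' L₂)

/-- Truth in a Kripke model. -/
def kSat {n : ℕ} {W : Type} (R : Fin n → W → W → Prop) (V : ℕ → Set W) :
    W → MFormula n → Prop
  | w, .prop p  => w ∈ V p
  | _, .bot     => False
  | w, .imp φ ψ => kSat R V w φ → kSat R V w ψ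
  | w, .box i φ => ∀ v : W, R i w v → kSat R V v φ

/-- The logic of a Kripke `n`-frame. -/
def KLogn {n : ℕ} {W : Type} [Nonempty W] (R : Fin n → W → W → Prop) :
    Set (MFormula n) :=
  {φ | ∀ (V : ℕ → Set W) (w : W), kSat R V w φ}

/-- The logic of a unimodal Kripke frame. -/
def KLog {W : Type} [Nonempty W] (R : W → W → Prop) : Set (MFormula 1) :=
  KLogn (fun _ => R)

/-- The logic of a bimodal Kripke frame. -/
def KLog2 {W : Type} [Nonempty W] (R₁ R₂ : W → W → Prop) : Set (MFormula 2) :=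
  KLogn ![R₁, R₂]

/-- Truth in a (monotone) neighborhood model: `x ⊨ □_i φ` iff the truth set of `φ`
belongs to the filter `τ i x`. -/
def nSat {n : ℕ} {X : Type} (τ : Fin n → X → Filter X) (V : ℕ → Set X) :
    X → MFormula n → Prop
  | x, .prop p  => x ∈ V p
  | _, .bot     => False
  | x, .imp φ ψ => nSat τ V x φ → nSat τ V x ψ
  | x, .box i φ => {y | nSat τ V y φ} ∈ τ i x

/-- The logic of a neighborhood `n`-frame. -/
def NLogn {n : ℕ} {X : Type} [Nonempty X] (τ : Fin n → X → Filter X) :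
    Set (MFormula n) :=
  {φ | ∀ (V : ℕ → Set X) (x : X), nSat τ V x φ}

/-- The logic of a unimodal neighborhood frame. -/
def NLog {X : Type} [Nonempty X] (τ : X → Filter X) : Set (MFormula 1) :=
  NLogn (fun _ => τ)

/-- The logic of a neighborhood 2-frame. -/
def NLog2 {X : Type} [Nonempty X] (τ₁ τ₂ : X → Filter X) : Set (MFormula 2) :=
  NLogn ![τ₁, τ₂]

/-- Validity of a unimodal formula in a neighborhood frame. -/
def NValid {X : Type} (τ : X → Filter X) (φ : MFormula 1) : Prop :=
  ∀ (V : ℕ → Set X) (x : X), nSat (fun _ => τ) V x φ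

/-- The neighborhood frame `N(F)` of a Kripke frame `F = (W, R)`:
`τ(w)` is the principal filter of `R(w)`. -/
def nOfK {W : Type} (R : W → W → Prop) (w : W) : Filter W :=
  Filter.principal {v | R w v}

/-- Bounded morphisms between neighborhood frames (with neighborhood functions
indexed by `ι`). -/
def IsNdMorphism {ι X Y : Type} (τ : ι → X → Filter X) (σ : ι → Y → Filter Y)
    (f : X → Y) : Prop :=
  Function.Surjective f ∧
    ∀ (i : ι) (x : X),
      (∀ U ∈ τ i x, f '' U ∈ σ i (f x)) ∧
      (∀ V ∈ σ i (f x), ∃ U ∈ τ i x, f '' U ⊆ V)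

/-- First neighborhood function of the product of two neighborhood frames:
`U ∈ τ'_1(x₁,x₂)` iff `∃ V ∈ τ₁ x₁, V × {x₂} ⊆ U`. -/
def prodTau1 {X₁ X₂ : Type} (τ₁ : X₁ → Filter X₁) (p : X₁ × X₂) :
    Filter (X₁ × X₂) :=
  (τ₁ p.1).map (fun x => (x, p.2))

/-- Second neighborhood function of the product of two neighborhood frames:
`U ∈ τ'_2(x₁,x₂)` iff `∃ V ∈ τ₂ x₂, {x₁} × V ⊆ U`. -/
def prodTau2 {X₁ X₂ : Type} (τ₂ : X₂ → Filter X₂) (p : X₁ × X₂) :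
    Filter (X₁ × X₂) :=
  (τ₂ p.2).map (fun y => (p.1, y))

/-- The successor relation on finite sequences: `a R b` iff `b = a·x` for some `x ∈ A`. -/
def sucRel (A : Type) (a b : List A) : Prop := ∃ x : A, b = a ++ [x]

/-- The four kinds of tree frames: irreflexive/reflexive, non-transitive/transitive. -/
inductive TreeKind : Type
  | inn  -- irreflexive non-transitive: F_in
  | rn   -- reflexive non-transitive: F_rn (reflexive closure)
  | itr  -- irreflexive transitive: F_it (transitive closure)
  | rt   -- reflexive transitive: F_rt (reflexive-transitive closure)

/-- The relation of the tree frame `F_{ξη}[A]` on `A*`. -/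
def treeRel (A : Type) : TreeKind → List A → List A → Prop
  | .inn => sucRel A
  | .rn  => fun a b => a = b ∨ sucRel A a b
  | .itr => Relation.TransGen (sucRel A)
  | .rt  => Relation.ReflTransGen (sucRel A)

/-- First relation of the product frame `F₁ ⊗ F₂` on `(A ⊔ B)*`:
`x R'_1 y` iff `y = x·z` for some `z ∈ A*` with `Λ R₁ z`. -/
def prodRel1 (A B : Type) (k : TreeKind) (x y : List (A ⊕ B)) : Prop :=
  ∃ z : List A, treeRel A k [] z ∧ y = x ++ z.map Sum.inl

/-- Second relation of the product frame `F₁ ⊗ F₂` on `(A ⊔ B)*`. -/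
def prodRel2 (A B : Type) (k : TreeKind) (x y : List (A ⊕ B)) : Prop :=
  ∃ z : List B, treeRel B k [] z ∧ y = x ++ z.map Sum.inr

/-- Pseudo-infinite sequences over `A ∪ {0}` (with `0` modelled by `none`, so
automatically `0 ∉ A`) that are eventually `0`. -/
def PSeq (A : Type) : Type :=
  {α : ℕ → Option A // ∃ N, ∀ k ≥ N, α k = none}

instance {A : Type} : Nonempty (PSeq A) := ⟨⟨fun _ => none, 0, fun _ _ => rfl⟩⟩

/-- `st(α)`: the least `N` such that `α` has only zeros from position `N` on. -/
noncomputable def PSeq.st {A : Type} (α : PSeq A) : ℕ :=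
  sInf {N | ∀ k ≥ N, α.1 k = none}

/-- `f_F(α)`: the finite sequence obtained from `α` by deleting all zeros. -/
noncomputable def PSeq.forget {A : Type} (α : PSeq A) : List A :=
  ((List.range α.st).map α.1).reduceOption

/-- The basic neighborhood `U_k(α)` of `α`, relative to the relation `R` on `A*`:
`{β ∈ X : α|_m = β|_m and f_F(α) R f_F(β)}` where `m = max(k, st(α))`. -/
def Unbhd {A : Type} (R : List A → List A → Prop) (k : ℕ) (α : PSeq A) :
    Set (PSeq A) :=
  {β | (∀ i < max k α.st, α.1 i = β.1 i) ∧ R α.forget β.forget}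

/-- The neighborhood function of `N_ω(F)`: `τ(α)` is the filter generated by the
base `{U_k(α) : k ∈ ℕ}`. -/
noncomputable def nOmega {A : Type} (R : List A → List A → Prop) (α : PSeq A) :
    Filter (PSeq A) :=
  ⨅ k : ℕ, Filter.principal (Unbhd R k α)

/-- The interleaving `x₁ y₁ x₂ y₂ …` of two pseudo-infinite sequences. -/
def interleave {A B : Type} (α : PSeq A) (β : PSeq B) : PSeq (A ⊕ B) :=
  ⟨fun n => if n % 2 = 0 then (α.1 (n / 2)).map Sum.inl
            else (β.1 (n / 2)).map Sum.inr, by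
    obtain ⟨N₁, h₁⟩ := α.2
    obtain ⟨N₂, h₂⟩ := β.2
    refine ⟨2 * max N₁ N₂, fun k hk => ?_⟩
    have hdiv : max N₁ N₂ ≤ k / 2 := by omega
    by_cases h : k % 2 = 0
    · simp [h, h₁ (k / 2) (le_trans (le_max_left _ _) hdiv)]
    · simp [h, h₂ (k / 2) (le_trans (le_max_right _ _) hdiv)]⟩

/-- The map `g`: delete all zeros from the interleaving of `α` and `β`. -/
noncomputable def gMap {A B : Type} (p : PSeq A × PSeq B) : List (A ⊕ B) :=
  (interleave p.1 p.2).forget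

/-!
The map `gMap` (interleave, then delete the zeros) from `N_ω(F₁) × N_ω(F₂)` onto the frame
`F₁ ⊗ F₂` on `(A ⊕ B)*` is a bounded morphism: moving `α` inside a basic neighbourhood
`U_k(α)` only changes it beyond position `max k (st α)`, so for `k ≥ st β` it appends to
`gMap (α, β)` a word over `A` that is `R₁`-related to `[]`; conversely any such word can be
spliced into `α` beyond every constrained position. Hence
`Log(N_ω(F₁) × N_ω(F₂)) ⊆ Log(F₁ ⊗ F₂)`.

For `Log(F₁ ⊗ F₂) ⊆ Log(F₁) ⊗ Log(F₂)`, let `φ₀` lie outside the fusion `L`, and label the root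
of `(A ⊕ B)*` by an `L`-consistent type (set of subformulas of `φ₀`) omitting `φ₀`. A maximal
block of letters from one side, starting at a node labelled `u`, is read in a model on `F_i`
of the `i`-reduct of "`u` holds, and up to depth `md φ₀` only consistent types occur". That
formula is `L`-consistent, so its reduct is satisfiable on `F_i`: `Log(F_i) ⊆ L` after
translation, and the reduct replaces the boxes of the other modality by fresh letters, which
a substitution restores. Labelling each node by its type in its block's model gives a truth
lemma up to depth `md φ₀`, which refutes `φ₀` at the root.
-/

namespace MFormula

variable {n : ℕ}

def conj : List (MFormula n) → MFormula n
  | [] => bot.neg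
  | a :: l => (a.imp (conj l).neg).neg

def boxIter (i : Fin n) : ℕ → MFormula n → MFormula n
  | 0, a => a
  | d + 1, a => box i (boxIter i d a)

def md : MFormula n → ℕ
  | prop _ => 0
  | bot => 0
  | imp a b => max (md a) (md b)
  | box _ a => md a + 1

def enc : MFormula n → ℕ
  | prop p => Nat.pair 0 p
  | bot => Nat.pair 1 0
  | imp a b => Nat.pair 2 (Nat.pair (enc a) (enc b))
  | box i a => Nat.pair 3 (Nat.pair i (enc a))

theorem enc_injective : Function.Injective (enc (n := n)) := by
  intro a
  induction a with
  | prop p => intro b h; cases b <;> simp_all [enc, Nat.pair_eq_pair]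
  | bot => intro b h; cases b <;> simp_all [enc, Nat.pair_eq_pair]
  | imp a₁ a₂ ih₁ ih₂ =>
    intro b h; cases b <;> simp [enc, Nat.pair_eq_pair] at h ⊢
    exact ⟨ih₁ h.1, ih₂ h.2⟩
  | box i a ih =>
    intro b h; cases b <;> simp [enc, Nat.pair_eq_pair] at h ⊢
    exact ⟨Fin.ext h.1, ih h.2⟩

instance : DecidableEq (MFormula n) := fun _ _ => decidable_of_iff _ enc_injective.eq_iff

instance : Inhabited (MFormula n) := ⟨bot⟩

def sub : MFormula n → Finset (MFormula n)
  | prop p => {prop p}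
  | bot => {bot}
  | imp a b => insert (imp a b) (sub a ∪ sub b)
  | box i a => insert (box i a) (sub a)

theorem mem_sub_self (a : MFormula n) : a ∈ sub a := by
  cases a <;> simp [sub]

theorem sub_subset_sub_imp_left (a b : MFormula n) : sub a ⊆ sub (imp a b) :=
  Finset.subset_union_left.trans (Finset.subset_insert _ _)

theorem sub_subset_sub_imp_right (a b : MFormula n) : sub b ⊆ sub (imp a b) :=
  Finset.subset_union_right.trans (Finset.subset_insert _ _)

theorem sub_subset_sub_box (i : Fin n) (a : MFormula n) : sub a ⊆ sub (box i a) :=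
  Finset.subset_insert _ _

theorem sub_subset_of_mem {a b : MFormula n} (h : b ∈ sub a) : sub b ⊆ sub a := by
  induction a with
  | prop | bot => simp_all [sub]
  | imp a₁ a₂ ih₁ ih₂ =>
    simp only [sub, Finset.mem_insert, Finset.mem_union] at h
    rcases h with rfl | h | h
    · rfl
    · exact (ih₁ h).trans (sub_subset_sub_imp_left a₁ a₂)
    · exact (ih₂ h).trans (sub_subset_sub_imp_right a₁ a₂)
  | box i a ih =>
    simp only [sub, Finset.mem_insert] at h
    rcases h with rfl | h
    · rfl
    · exact (ih h).trans (sub_subset_sub_box i a)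

theorem mem_sub_of_imp_mem_sub {φ a b : MFormula n} (h : imp a b ∈ sub φ) :
    a ∈ sub φ ∧ b ∈ sub φ :=
  ⟨sub_subset_of_mem h (sub_subset_sub_imp_left a b (mem_sub_self a)),
    sub_subset_of_mem h (sub_subset_sub_imp_right a b (mem_sub_self b))⟩

theorem mem_sub_of_box_mem_sub {φ a : MFormula n} {i : Fin n}
    (h : box i a ∈ sub φ) : a ∈ sub φ :=
  sub_subset_of_mem h (sub_subset_sub_box i a (mem_sub_self a))

/-- Boxes of the other modality become fresh odd letters, so that the substitution `unred`
can restore them. -/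
def red (i : Fin 2) : MFormula 2 → MFormula 1
  | prop p => prop (2 * p)
  | bot => bot
  | imp a b => imp (red i a) (red i b)
  | box j a => if j = i then box 0 (red i a) else prop (2 * enc (box j a) + 1)

noncomputable def unred (m : ℕ) : MFormula 2 :=
  if m % 2 = 0 then prop (m / 2) else Function.invFun enc (m / 2)

theorem subst_unred_trTo_red (i : Fin 2) (a : MFormula 2) :
    (trTo i (red i a)).subst unred = a := by
  induction a with
  | prop p => simp [red, trTo, subst, unred]
  | bot => rfl
  | imp a b iha ihb => simp [red, trTo, subst, iha, ihb]
  | box j a ih =>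
    by_cases hj : j = i
    · subst hj; simp [red, trTo, subst, ih]
    · have hodd : (2 * enc (box j a) + 1) % 2 ≠ 0 := by omega
      have hhalf : (2 * enc (box j a) + 1) / 2 = enc (box j a) := by omega
      simp only [red, if_neg hj, trTo, subst, unred, if_neg hodd, hhalf]
      exact Function.leftInverse_invFun enc_injective _

end MFormula

open MFormula

structure IsBoolVal {n : ℕ} (v : MFormula n → Prop) : Prop where
  not_bot : ¬ v bot
  imp_iff : ∀ a b : MFormula n, v (a.imp b) ↔ (v a → v b)

namespace IsBoolVal

variable {n : ℕ} {v : MFormula n → Prop}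

theorem neg_iff (hv : IsBoolVal v) (a : MFormula n) : v a.neg ↔ ¬ v a := by
  rw [neg, hv.imp_iff]
  exact ⟨fun h ha => hv.not_bot (h ha), fun h ha => (h ha).elim⟩

theorem conj_iff (hv : IsBoolVal v) (l : List (MFormula n)) : v (conj l) ↔ ∀ a ∈ l, v a := by
  induction l with
  | nil => simp [conj, hv.neg_iff, hv.not_bot]
  | cons a l ih => simp [conj, hv.neg_iff, hv.imp_iff, ih]

end IsBoolVal

theorem isTautology_of_isBoolVal {n : ℕ} {φ : MFormula n} (h : ∀ v, IsBoolVal v → v φ) :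
    IsTautology φ :=
  fun v hb hi => h v ⟨hb, hi⟩

theorem isBoolVal_kSat {n : ℕ} {W : Type} (R : Fin n → W → W → Prop) (V : ℕ → Set W) (x : W) :
    IsBoolVal (kSat R V x) :=
  ⟨id, fun _ _ => Iff.rfl⟩

namespace IsNormalLogic

variable {n : ℕ} {L : Set (MFormula n)}

theorem mp_taut (hL : IsNormalLogic L) {a b : MFormula n} (h : IsTautology (a.imp b))
    (ha : a ∈ L) : b ∈ L :=
  hL.mp _ _ (hL.taut _ h) ha

theorem conj_mem (hL : IsNormalLogic L) {l : List (MFormula n)} (h : ∀ a ∈ l, a ∈ L) :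
    conj l ∈ L := by
  induction l with
  | nil =>
    exact hL.taut _ (isTautology_of_isBoolVal fun v hv => by simp [conj, hv.neg_iff, hv.not_bot])
  | cons a l ih =>
    have hpair : IsTautology (a.imp ((conj l).imp (conj (a :: l)))) :=
      isTautology_of_isBoolVal fun v hv => by simp only [conj, hv.imp_iff, hv.neg_iff]; tauto
    exact hL.mp _ _ (hL.mp_taut hpair (h a (by simp))) (ih fun b hb => h b (by simp [hb]))

theorem boxIter_mem (hL : IsNormalLogic L) (i : Fin n) (d : ℕ) {a : MFormula n} (h : a ∈ L) :
    boxIter i d a ∈ L := by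
  induction d with
  | zero => exact h
  | succ d ih => exact hL.nec _ _ ih

end IsNormalLogic

theorem isNormalLogic_normalClosure {n : ℕ} (Γ : Set (MFormula n)) :
    IsNormalLogic (NormalClosure Γ) where
  taut φ h := Set.mem_sInter.2 fun _ hL => hL.1.taut φ h
  kax i p q := Set.mem_sInter.2 fun _ hL => hL.1.kax i p q
  mp φ ψ h₁ h₂ := Set.mem_sInter.2 fun L hL => hL.1.mp φ ψ (h₁ L hL) (h₂ L hL)
  subst φ s h := Set.mem_sInter.2 fun L hL => hL.1.subst φ s (h L hL)
  nec i φ h := Set.mem_sInter.2 fun L hL => hL.1.nec i φ (h L hL)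

theorem subset_normalClosure {n : ℕ} (Γ : Set (MFormula n)) : Γ ⊆ NormalClosure Γ :=
  fun _ ha => Set.mem_sInter.2 fun _ hL => hL.2 ha

theorem not_mem_kLog_red {L : Set (MFormula 2)} (hL : IsNormalLogic L) {i : Fin 2} {W : Type}
    [Nonempty W] {R : W → W → Prop} (hR : trTo i '' KLog R ⊆ L) {a : MFormula 2}
    (ha : a ∉ L) : red i a ∉ KLog R := fun h =>
  ha (subst_unred_trTo_red i a ▸ hL.subst _ unred (hR ⟨_, h, rfl⟩))

theorem kSat_box_iff {n : ℕ} {W : Type} {R : Fin n → W → W → Prop} {V : ℕ → Set W}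
    (i : Fin n) (a : MFormula n) (x : W) :
    kSat R V x (box i a) ↔ ∀ y, R i x y → kSat R V y a := Iff.rfl

theorem kSat_comap_iff {n : ℕ} {W W' : Type} {R : Fin n → W → W → Prop}
    {R' : Fin n → W' → W' → Prop} {f : W → W'}
    (hf : ∀ i x y', R' i (f x) y' ↔ ∃ y, R i x y ∧ f y = y') (V : ℕ → Set W')
    (φ : MFormula n) (x : W) : kSat R (fun p => f ⁻¹' V p) x φ ↔ kSat R' V (f x) φ := by
  induction φ generalizing x with
  | prop p => rfl
  | bot => rfl
  | imp a b iha ihb => simp only [kSat, iha, ihb]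
  | box i a ih =>
    simp only [kSat, hf, forall_exists_index, and_imp, ih]
    exact ⟨fun h _ y hy hfy => hfy ▸ h y hy, fun h y hy => h _ y hy rfl⟩

theorem nSat_comap_iff {n : ℕ} {X W : Type} {τ : Fin n → X → Filter X}
    {R : Fin n → W → W → Prop} {f : X → W}
    (hf : ∀ i x (P : W → Prop), {x' | P (f x')} ∈ τ i x ↔ ∀ y, R i (f x) y → P y)
    (V : ℕ → Set W) (φ : MFormula n) (x : X) :
    nSat τ (fun p => f ⁻¹' V p) x φ ↔ kSat R V (f x) φ := by
  induction φ generalizing x with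
  | prop p => rfl
  | bot => rfl
  | imp a b iha ihb => simp only [nSat, kSat, iha, ihb]
  | box i a ih =>
    simp only [nSat, kSat, ih]
    exact hf i x (kSat R V · a)

section TreeRel

variable {A : Type}

theorem transGen_sucRel_iff {v y : List A} :
    Relation.TransGen (sucRel A) v y ↔ ∃ w, y = v ++ w ∧ Relation.TransGen (sucRel A) [] w := by
  constructor
  · intro h
    induction h with
    | single h =>
      obtain ⟨x, rfl⟩ := h
      exact ⟨[x], rfl, .single ⟨x, rfl⟩⟩
    | tail _ h ih =>
      obtain ⟨w, rfl, hw⟩ := ih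
      obtain ⟨x, rfl⟩ := h
      exact ⟨w ++ [x], by simp, hw.tail ⟨x, rfl⟩⟩
  · rintro ⟨w, rfl, hw⟩
    induction hw with
    | single h =>
      obtain ⟨x, rfl⟩ := h
      exact .single ⟨x, rfl⟩
    | tail _ h ih =>
      obtain ⟨x, rfl⟩ := h
      exact ih.tail ⟨x, by simp⟩

theorem treeRel_iff (k : TreeKind) {v y : List A} :
    treeRel A k v y ↔ ∃ w, y = v ++ w ∧ treeRel A k [] w := by
  cases k with
  | inn => simp [treeRel, sucRel]
  | rn =>
    simp only [treeRel, sucRel]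
    constructor
    · rintro (rfl | ⟨x, rfl⟩)
      · exact ⟨[], by simp, .inl rfl⟩
      · exact ⟨[x], rfl, .inr ⟨x, rfl⟩⟩
    · rintro ⟨w, rfl, rfl | ⟨x, rfl⟩⟩
      · simp
      · exact .inr ⟨x, rfl⟩
  | itr => exact transGen_sucRel_iff
  | rt =>
    simp only [treeRel]
    rw [Relation.reflTransGen_iff_eq_or_transGen, transGen_sucRel_iff]
    constructor
    · rintro (rfl | ⟨w, rfl, hw⟩)
      · exact ⟨[], by simp, .refl⟩
      · exact ⟨w, rfl, hw.to_reflTransGen⟩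
    · rintro ⟨w, rfl, hw⟩
      rcases Relation.reflTransGen_iff_eq_or_transGen.1 hw with rfl | hw
      · simp
      · exact .inr ⟨w, rfl, hw⟩

theorem treeRel_append_iff (k : TreeKind) (v w : List A) :
    treeRel A k v (v ++ w) ↔ treeRel A k [] w := by
  rw [treeRel_iff]; simp

theorem kSat_append_iff (k : TreeKind) (v : List A) (V : ℕ → Set (List A)) (φ : MFormula 1)
    (z : List A) :
    kSat (fun _ => treeRel A k) (fun p => (v ++ ·) ⁻¹' V p) z φ ↔
      kSat (fun _ => treeRel A k) V (v ++ z) φ :=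
  kSat_comap_iff (fun _ z y' => by
    simp only [treeRel_iff k (v := z), treeRel_iff k (v := v ++ z)]
    constructor
    · rintro ⟨w, rfl, hw⟩
      exact ⟨z ++ w, ⟨w, rfl, hw⟩, by simp⟩
    · rintro ⟨_, ⟨w, rfl, hw⟩, rfl⟩
      exact ⟨w, by simp, hw⟩) V φ z

end TreeRel

theorem forall_prodRel1_iff {A B : Type} {k : TreeKind} {x : List (A ⊕ B)}
    {P : List (A ⊕ B) → Prop} :
    (∀ y, prodRel1 A B k x y → P y) ↔ ∀ w, treeRel A k [] w → P (x ++ w.map .inl) :=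
  ⟨fun h w hw => h _ ⟨w, hw, rfl⟩, fun h _ ⟨w, hw, hy⟩ => hy ▸ h w hw⟩

theorem forall_prodRel2_iff {A B : Type} {k : TreeKind} {x : List (A ⊕ B)}
    {P : List (A ⊕ B) → Prop} :
    (∀ y, prodRel2 A B k x y → P y) ↔ ∀ w, treeRel B k [] w → P (x ++ w.map .inr) :=
  ⟨fun h w hw => h _ ⟨w, hw, rfl⟩, fun h _ ⟨w, hw, hy⟩ => hy ▸ h w hw⟩

section Types

variable (φ₀ : MFormula 2)

noncomputable def typeConj (u : Finset (MFormula 2)) : MFormula 2 :=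
  conj ((sub φ₀).toList.map fun ψ => if ψ ∈ u then ψ else ψ.neg)

open Classical in
noncomputable def typeOf (v : MFormula 2 → Prop) : Finset (MFormula 2) :=
  (sub φ₀).filter v

open Classical in
noncomputable def excludeTypes (P : Finset (MFormula 2) → Prop) : MFormula 2 :=
  conj (((sub φ₀).powerset.filter P).toList.map fun u => (typeConj φ₀ u).neg)

variable {φ₀}

theorem mem_typeOf {v : MFormula 2 → Prop} {ψ : MFormula 2} :
    ψ ∈ typeOf φ₀ v ↔ ψ ∈ sub φ₀ ∧ v ψ := by
  classical
  simp [typeOf]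

theorem typeOf_subset (v : MFormula 2 → Prop) : typeOf φ₀ v ⊆ sub φ₀ :=
  fun _ h => (mem_typeOf.1 h).1

namespace IsBoolVal

variable {v : MFormula 2 → Prop}

theorem typeConj_iff (hv : IsBoolVal v) (u : Finset (MFormula 2)) :
    v (typeConj φ₀ u) ↔ ∀ ψ ∈ sub φ₀, (v ψ ↔ ψ ∈ u) := by
  rw [typeConj, hv.conj_iff]
  simp only [List.mem_map, Finset.mem_toList, forall_exists_index, and_imp,
    forall_apply_eq_imp_iff₂]
  refine forall₂_congr fun ψ _ => ?_
  split_ifs with h <;> simp [h, hv.neg_iff]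

theorem typeConj_typeOf (hv : IsBoolVal v) : v (typeConj φ₀ (typeOf φ₀ v)) :=
  (hv.typeConj_iff _).2 fun _ hψ => by simp [mem_typeOf, hψ]

theorem typeOf_eq {u : Finset (MFormula 2)} (hv : IsBoolVal v) (hu : u ⊆ sub φ₀)
    (h : v (typeConj φ₀ u)) : typeOf φ₀ v = u := by
  ext ψ
  rw [mem_typeOf]
  by_cases hψ : ψ ∈ sub φ₀
  · simp [hψ, (hv.typeConj_iff u).1 h ψ hψ]
  · exact iff_of_false (fun h' => hψ h'.1) (fun h' => hψ (hu h'))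

theorem bot_not_mem_typeOf (hv : IsBoolVal v) : bot ∉ typeOf φ₀ v :=
  fun h => hv.not_bot (mem_typeOf.1 h).2

theorem imp_mem_typeOf_iff (hv : IsBoolVal v) {a b : MFormula 2} (h : imp a b ∈ sub φ₀) :
    imp a b ∈ typeOf φ₀ v ↔ (a ∈ typeOf φ₀ v → b ∈ typeOf φ₀ v) := by
  obtain ⟨ha, hb⟩ := mem_sub_of_imp_mem_sub h
  simp [mem_typeOf, h, ha, hb, hv.imp_iff]

theorem not_typeOf_of_excludeTypes (hv : IsBoolVal v) {P : Finset (MFormula 2) → Prop}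
    (h : v (excludeTypes φ₀ P)) : ¬ P (typeOf φ₀ v) := by
  classical
  intro hP
  rw [excludeTypes, hv.conj_iff] at h
  refine (hv.neg_iff _).1 (h _ ?_) (hv.typeConj_typeOf (φ₀ := φ₀))
  simp only [List.mem_map, Finset.mem_toList, Finset.mem_filter, Finset.mem_powerset]
  exact ⟨_, ⟨typeOf_subset v, hP⟩, rfl⟩

end IsBoolVal

theorem IsNormalLogic.excludeTypes_mem {L : Set (MFormula 2)} (hL : IsNormalLogic L)
    {P : Finset (MFormula 2) → Prop} (h : ∀ u ⊆ sub φ₀, P u → (typeConj φ₀ u).neg ∈ L) :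
    excludeTypes φ₀ P ∈ L := by
  classical
  refine hL.conj_mem fun a ha => ?_
  simp only [List.mem_map, Finset.mem_toList, Finset.mem_filter, Finset.mem_powerset] at ha
  obtain ⟨u, ⟨hu, hP⟩, rfl⟩ := ha
  exact h u hu hP

variable (φ₀) (L : Set (MFormula 2))

def IsConType (u : Finset (MFormula 2)) : Prop := u ⊆ sub φ₀ ∧ (typeConj φ₀ u).neg ∉ L

noncomputable def onlyConTypes : MFormula 2 :=
  excludeTypes φ₀ fun u => (typeConj φ₀ u).neg ∈ L

/-- The truth lemma never looks deeper than `md φ₀` below a block root, so consistency of the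
types met there is only demanded up to that depth. -/
noncomputable def seed (i : Fin 2) (u : Finset (MFormula 2)) : MFormula 2 :=
  conj (typeConj φ₀ u :: (List.range (md φ₀ + 1)).map fun d => boxIter i d (onlyConTypes φ₀ L))

variable {φ₀ L}

theorem IsBoolVal.isConType_typeOf {v : MFormula 2 → Prop} (hv : IsBoolVal v)
    (h : v (onlyConTypes φ₀ L)) : IsConType φ₀ L (typeOf φ₀ v) :=
  ⟨typeOf_subset v, hv.not_typeOf_of_excludeTypes h⟩

theorem exists_isConType_not_mem (hL : IsNormalLogic L) (h : φ₀ ∉ L) :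
    ∃ u, IsConType φ₀ L u ∧ φ₀ ∉ u := by
  by_contra! hno
  have hex : excludeTypes φ₀ (φ₀ ∉ ·) ∈ L :=
    hL.excludeTypes_mem fun u hu hφ => by_contra fun hc => hφ (hno u ⟨hu, hc⟩)
  refine h (hL.mp_taut (isTautology_of_isBoolVal fun v hv => (hv.imp_iff _ _).2 fun hexv => ?_) hex)
  exact (mem_typeOf.1 (not_not.1 (hv.not_typeOf_of_excludeTypes hexv))).2

theorem seed_neg_not_mem (hL : IsNormalLogic L) {u : Finset (MFormula 2)}
    (hu : IsConType φ₀ L u) (i : Fin 2) : (seed φ₀ L i u).neg ∉ L := by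
  set boxes := (List.range (md φ₀ + 1)).map fun d => boxIter i d (onlyConTypes φ₀ L)
  have hboxes : conj boxes ∈ L := hL.conj_mem fun a ha => by
    obtain ⟨d, -, rfl⟩ := List.mem_map.1 ha
    exact hL.boxIter_mem i d (hL.excludeTypes_mem fun _ _ h => h)
  have htaut : IsTautology ((seed φ₀ L i u).neg.imp ((conj boxes).imp (typeConj φ₀ u).neg)) :=
    isTautology_of_isBoolVal fun v hv => by
      simp only [seed, hv.imp_iff, hv.neg_iff, hv.conj_iff, List.mem_cons, forall_eq_or_imp]
      tauto
  exact fun h => hu.2 (hL.mp _ _ (hL.mp_taut htaut h) hboxes)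

end Types

section ComponentModel

variable (φ₀ : MFormula 2) (L : Set (MFormula 2)) (C : Type) (k : TreeKind) (i : Fin 2)

/-- Junk unless `u` is consistent, see `compSat_seed`. -/
noncomputable def compModel (u : Finset (MFormula 2)) : ℕ → Set (List C) :=
  Classical.epsilon fun V => kSat (fun _ => treeRel C k) V [] (red i (seed φ₀ L i u))

def compSat (u : Finset (MFormula 2)) (z : List C) (ψ : MFormula 2) : Prop :=
  kSat (fun _ => treeRel C k) (compModel φ₀ L C k i u) z (red i ψ)

noncomputable def compType (u : Finset (MFormula 2)) (z : List C) : Finset (MFormula 2) :=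
  typeOf φ₀ (compSat φ₀ L C k i u z)

variable {φ₀ L C k i}

theorem isBoolVal_compSat (u : Finset (MFormula 2)) (z : List C) :
    IsBoolVal (compSat φ₀ L C k i u z) :=
  ⟨id, fun _ _ => Iff.rfl⟩

theorem compSat_box_iff {u : Finset (MFormula 2)} {z : List C} (a : MFormula 2) :
    compSat φ₀ L C k i u z (box i a) ↔
      ∀ w, treeRel C k [] w → compSat φ₀ L C k i u (z ++ w) a := by
  simp only [compSat, red, if_true, kSat_box_iff, treeRel_iff k (v := z), forall_exists_index,
    and_imp]
  exact ⟨fun h w hw => h _ w rfl hw, fun h _ w hy hw => hy ▸ h w hw⟩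

theorem compSat_seed (hL : IsNormalLogic L) (hR : trTo i '' KLog (treeRel C k) ⊆ L)
    {u : Finset (MFormula 2)} (hu : IsConType φ₀ L u) :
    compSat φ₀ L C k i u [] (seed φ₀ L i u) := by
  refine Classical.epsilon_spec (p := fun V => kSat _ V [] _) ?_
  obtain ⟨V, w, hw⟩ : ∃ (V : ℕ → Set (List C)) (w : List C),
      ¬ kSat (fun _ => treeRel C k) V w (red i (seed φ₀ L i u).neg) := by
    simpa [KLog, KLogn] using not_mem_kLog_red hL hR (seed_neg_not_mem hL hu i)
  refine ⟨_, (kSat_append_iff k w V _ []).2 ?_⟩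
  simpa using not_not.1 (mt ((isBoolVal_kSat _ V w).neg_iff _).2 hw)

theorem compType_nil (hL : IsNormalLogic L) (hR : trTo i '' KLog (treeRel C k) ⊆ L)
    {u : Finset (MFormula 2)} (hu : IsConType φ₀ L u) : compType φ₀ L C k i u [] = u := by
  have h := ((isBoolVal_compSat u []).conj_iff _).1 (compSat_seed hL hR hu)
  exact (isBoolVal_compSat u []).typeOf_eq hu.1 (h _ List.mem_cons_self)

theorem compSat_nil_boxIter (hL : IsNormalLogic L) (hR : trTo i '' KLog (treeRel C k) ⊆ L)
    {u : Finset (MFormula 2)} (hu : IsConType φ₀ L u) {d : ℕ} (hd : d ≤ md φ₀) :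
    compSat φ₀ L C k i u [] (boxIter i d (onlyConTypes φ₀ L)) := by
  have h := ((isBoolVal_compSat u []).conj_iff _).1 (compSat_seed hL hR hu)
  exact h _ (List.mem_cons_of_mem _ (List.mem_map.2 ⟨d, List.mem_range.2 (by omega), rfl⟩))

theorem compSat_boxIter_append {u : Finset (MFormula 2)} {z w : List C} {X : MFormula 2}
    {m : ℕ} (h : ∀ j ≤ m + 1, compSat φ₀ L C k i u z (boxIter i j X))
    (hw : treeRel C k [] w) : ∀ j ≤ m, compSat φ₀ L C k i u (z ++ w) (boxIter i j X) :=
  fun j hj => (compSat_box_iff _).1 (h (j + 1) (by omega)) w hw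

theorem box_mem_compType_iff {u : Finset (MFormula 2)} {z : List C} {χ : MFormula 2}
    {P : List C → Prop} (hχ : box i χ ∈ sub φ₀)
    (hP : ∀ w, treeRel C k [] w → (P w ↔ χ ∈ compType φ₀ L C k i u (z ++ w))) :
    box i χ ∈ compType φ₀ L C k i u z ↔ ∀ w, treeRel C k [] w → P w := by
  simp only [compType, mem_typeOf, hχ, mem_sub_of_box_mem_sub hχ, true_and] at hP ⊢
  rw [compSat_box_iff]
  exact forall₂_congr fun w hw => (hP w hw).symm

end ComponentModel

section AlternatingTree

variable {A B : Type} (k₁ k₂ : TreeKind) (φ₀ : MFormula 2) (L : Set (MFormula 2))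

/-- A node of `(A ⊕ B)*` is modelled by its last maximal block of letters from one side: the
type `b` labelling the start of the block and the path `z` inside the block, which is read in
the component model of `b`. -/
noncomputable def blockType : Finset (MFormula 2) × (List A ⊕ List B) → Finset (MFormula 2)
  | (b, .inl z) => compType φ₀ L A k₁ 0 b z
  | (b, .inr z) => compType φ₀ L B k₂ 1 b z

noncomputable def blockStep :
    Finset (MFormula 2) × (List A ⊕ List B) → A ⊕ B → Finset (MFormula 2) × (List A ⊕ List B)
  | (b, .inl z), .inl a => (b, .inl (z ++ [a]))
  | s@(_, .inr _), .inl a => (blockType k₁ k₂ φ₀ L s, .inl [a])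
  | s@(_, .inl _), .inr c => (blockType k₁ k₂ φ₀ L s, .inr [c])
  | (b, .inr z), .inr c => (b, .inr (z ++ [c]))

noncomputable def lastBlock (t₀ : Finset (MFormula 2)) (x : List (A ⊕ B)) :
    Finset (MFormula 2) × (List A ⊕ List B) :=
  x.foldl (blockStep k₁ k₂ φ₀ L) (t₀, .inl [])

noncomputable def nodeType (t₀ : Finset (MFormula 2)) (x : List (A ⊕ B)) : Finset (MFormula 2) :=
  blockType k₁ k₂ φ₀ L (lastBlock k₁ k₂ φ₀ L t₀ x)

/-- `m` is the modal depth still to be evaluated at the node. -/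
def IsGoodBlock (m : ℕ) : Finset (MFormula 2) × (List A ⊕ List B) → Prop
  | (b, .inl z) => IsConType φ₀ L b ∧ m ≤ md φ₀ ∧
      ∀ j ≤ m, compSat φ₀ L A k₁ 0 b z (boxIter 0 j (onlyConTypes φ₀ L))
  | (b, .inr z) => IsConType φ₀ L b ∧ m ≤ md φ₀ ∧
      ∀ j ≤ m, compSat φ₀ L B k₂ 1 b z (boxIter 1 j (onlyConTypes φ₀ L))

variable {k₁ k₂ φ₀ L}

theorem foldl_blockStep_inl (b : Finset (MFormula 2)) (z w : List A) :
    (w.map Sum.inl).foldl (blockStep k₁ k₂ φ₀ L) (b, (.inl z : List A ⊕ List B)) =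
      (b, .inl (z ++ w)) := by
  induction w generalizing z with
  | nil => simp
  | cons a w ih => simp [blockStep, ih]

theorem foldl_blockStep_inr (b : Finset (MFormula 2)) (z w : List B) :
    (w.map Sum.inr).foldl (blockStep k₁ k₂ φ₀ L) (b, (.inr z : List A ⊕ List B)) =
      (b, .inr (z ++ w)) := by
  induction w generalizing z with
  | nil => simp
  | cons a w ih => simp [blockStep, ih]

theorem exists_isBoolVal_blockType (s : Finset (MFormula 2) × (List A ⊕ List B)) :
    ∃ v, IsBoolVal v ∧ blockType k₁ k₂ φ₀ L s = typeOf φ₀ v := by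
  rcases s with ⟨b, z | z⟩
  exacts [⟨_, isBoolVal_compSat b z, rfl⟩, ⟨_, isBoolVal_compSat b z, rfl⟩]

theorem IsGoodBlock.mono {m m' : ℕ} {s : Finset (MFormula 2) × (List A ⊕ List B)}
    (h : IsGoodBlock k₁ k₂ φ₀ L m s) (hm : m' ≤ m) : IsGoodBlock k₁ k₂ φ₀ L m' s := by
  rcases s with ⟨b, z | z⟩ <;>
    exact ⟨h.1, hm.trans h.2.1, fun j hj => h.2.2 j (hj.trans hm)⟩

theorem IsGoodBlock.isConType_blockType {m : ℕ} {s : Finset (MFormula 2) × (List A ⊕ List B)}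
    (h : IsGoodBlock k₁ k₂ φ₀ L m s) : IsConType φ₀ L (blockType k₁ k₂ φ₀ L s) := by
  rcases s with ⟨b, z | z⟩ <;>
    exact (isBoolVal_compSat b z).isConType_typeOf (h.2.2 0 (Nat.zero_le _))

theorem exists_inl_block (hL : IsNormalLogic L) (hR₁ : trTo 0 '' KLog (treeRel A k₁) ⊆ L)
    {t₀ : Finset (MFormula 2)} {m : ℕ} {x : List (A ⊕ B)}
    (hx : IsGoodBlock k₁ k₂ φ₀ L (m + 1) (lastBlock k₁ k₂ φ₀ L t₀ x)) :
    ∃ b z, (∀ w, nodeType k₁ k₂ φ₀ L t₀ (x ++ w.map .inl) = compType φ₀ L A k₁ 0 b (z ++ w)) ∧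
      ∀ w, treeRel A k₁ [] w →
        IsGoodBlock k₁ k₂ φ₀ L m (lastBlock k₁ k₂ φ₀ L t₀ (x ++ w.map .inl)) := by
  have happ (w : List A) : lastBlock k₁ k₂ φ₀ L t₀ (x ++ w.map .inl) =
      (w.map .inl).foldl (blockStep k₁ k₂ φ₀ L) (lastBlock k₁ k₂ φ₀ L t₀ x) := List.foldl_append
  have hcon := hx.isConType_blockType
  rcases hs : lastBlock k₁ k₂ φ₀ L t₀ x with ⟨b, z | z⟩ <;> rw [hs] at hx hcon
  · refine ⟨b, z, fun w => ?_, fun w hw => ?_⟩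
    · rw [nodeType, happ, hs, foldl_blockStep_inl]; rfl
    · rw [happ, hs, foldl_blockStep_inl]
      exact ⟨hx.1, (Nat.le_succ m).trans hx.2.1, compSat_boxIter_append hx.2.2 hw⟩
  · have hx' : nodeType k₁ k₂ φ₀ L t₀ x = blockType k₁ k₂ φ₀ L (b, (.inr z : List A ⊕ List B)) := by
      rw [nodeType, hs]
    refine ⟨nodeType k₁ k₂ φ₀ L t₀ x, [], fun w => ?_, fun w hw => ?_⟩
    · cases w with
      | nil => simpa [hx'] using (compType_nil hL hR₁ hcon).symm
      | cons a w =>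
        rw [nodeType, happ, hs, List.map_cons, List.foldl_cons, hx']
        simp [blockStep, foldl_blockStep_inl, blockType]
    · cases w with
      | nil => simpa [hs] using hx.mono (Nat.le_succ m)
      | cons a w =>
        rw [happ, hs, List.map_cons, List.foldl_cons]
        simp only [blockStep, foldl_blockStep_inl]
        refine ⟨hcon, (Nat.le_succ m).trans hx.2.1, ?_⟩
        simpa using compSat_boxIter_append
          (fun j hj => compSat_nil_boxIter hL hR₁ hcon (hj.trans hx.2.1)) hw

theorem exists_inr_block (hL : IsNormalLogic L) (hR₂ : trTo 1 '' KLog (treeRel B k₂) ⊆ L)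
    {t₀ : Finset (MFormula 2)} {m : ℕ} {x : List (A ⊕ B)}
    (hx : IsGoodBlock k₁ k₂ φ₀ L (m + 1) (lastBlock k₁ k₂ φ₀ L t₀ x)) :
    ∃ b z, (∀ w, nodeType k₁ k₂ φ₀ L t₀ (x ++ w.map .inr) = compType φ₀ L B k₂ 1 b (z ++ w)) ∧
      ∀ w, treeRel B k₂ [] w →
        IsGoodBlock k₁ k₂ φ₀ L m (lastBlock k₁ k₂ φ₀ L t₀ (x ++ w.map .inr)) := by
  have happ (w : List B) : lastBlock k₁ k₂ φ₀ L t₀ (x ++ w.map .inr) =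
      (w.map .inr).foldl (blockStep k₁ k₂ φ₀ L) (lastBlock k₁ k₂ φ₀ L t₀ x) := List.foldl_append
  have hcon := hx.isConType_blockType
  rcases hs : lastBlock k₁ k₂ φ₀ L t₀ x with ⟨b, z | z⟩ <;> rw [hs] at hx hcon
  · have hx' : nodeType k₁ k₂ φ₀ L t₀ x = blockType k₁ k₂ φ₀ L (b, (.inl z : List A ⊕ List B)) := by
      rw [nodeType, hs]
    refine ⟨nodeType k₁ k₂ φ₀ L t₀ x, [], fun w => ?_, fun w hw => ?_⟩
    · cases w with
      | nil => simpa [hx'] using (compType_nil hL hR₂ hcon).symm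
      | cons a w =>
        rw [nodeType, happ, hs, List.map_cons, List.foldl_cons, hx']
        simp [blockStep, foldl_blockStep_inr, blockType]
    · cases w with
      | nil => simpa [hs] using hx.mono (Nat.le_succ m)
      | cons a w =>
        rw [happ, hs, List.map_cons, List.foldl_cons]
        simp only [blockStep, foldl_blockStep_inr]
        refine ⟨hcon, (Nat.le_succ m).trans hx.2.1, ?_⟩
        simpa using compSat_boxIter_append
          (fun j hj => compSat_nil_boxIter hL hR₂ hcon (hj.trans hx.2.1)) hw
  · refine ⟨b, z, fun w => ?_, fun w hw => ?_⟩
    · rw [nodeType, happ, hs, foldl_blockStep_inr]; rfl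
    · rw [happ, hs, foldl_blockStep_inr]
      exact ⟨hx.1, (Nat.le_succ m).trans hx.2.1, compSat_boxIter_append hx.2.2 hw⟩

theorem kSat_iff_mem_nodeType (hL : IsNormalLogic L)
    (hR₁ : trTo 0 '' KLog (treeRel A k₁) ⊆ L) (hR₂ : trTo 1 '' KLog (treeRel B k₂) ⊆ L)
    (t₀ : Finset (MFormula 2)) {ψ : MFormula 2} (hψ : ψ ∈ sub φ₀) {x : List (A ⊕ B)}
    (hx : IsGoodBlock k₁ k₂ φ₀ L (md ψ) (lastBlock k₁ k₂ φ₀ L t₀ x)) :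
    kSat ![prodRel1 A B k₁, prodRel2 A B k₂] (fun p => {y | prop p ∈ nodeType k₁ k₂ φ₀ L t₀ y})
      x ψ ↔ ψ ∈ nodeType k₁ k₂ φ₀ L t₀ x := by
  induction ψ generalizing x with
  | prop p => rfl
  | bot =>
    obtain ⟨v, hv, hδ⟩ := exists_isBoolVal_blockType (lastBlock k₁ k₂ φ₀ L t₀ x)
    exact iff_of_false id (by rw [nodeType, hδ]; exact hv.bot_not_mem_typeOf)
  | imp a b iha ihb =>
    obtain ⟨v, hv, hδ⟩ := exists_isBoolVal_blockType (lastBlock k₁ k₂ φ₀ L t₀ x)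
    obtain ⟨ha, hb⟩ := mem_sub_of_imp_mem_sub hψ
    rw [kSat, iha ha (hx.mono (le_max_left _ _)), ihb hb (hx.mono (le_max_right _ _)),
      nodeType, hδ, hv.imp_mem_typeOf_iff hψ]
  | box i χ ih =>
    have hχ := mem_sub_of_box_mem_sub hψ
    obtain rfl | rfl := Fin.exists_fin_two.1 ⟨i, rfl⟩
    · obtain ⟨b, z, hδ, hgood⟩ := exists_inl_block hL hR₁ hx
      have hx' : nodeType k₁ k₂ φ₀ L t₀ x = compType φ₀ L A k₁ 0 b z := by simpa using hδ []
      rw [kSat_box_iff, Matrix.cons_val_zero, forall_prodRel1_iff, hx']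
      refine (box_mem_compType_iff hψ fun w hw => ?_).symm
      rw [← hδ]
      exact ih hχ (hgood w hw)
    · obtain ⟨b, z, hδ, hgood⟩ := exists_inr_block hL hR₂ hx
      have hx' : nodeType k₁ k₂ φ₀ L t₀ x = compType φ₀ L B k₂ 1 b z := by simpa using hδ []
      rw [kSat_box_iff, Matrix.cons_val_one, Matrix.cons_val_zero, forall_prodRel2_iff, hx']
      refine (box_mem_compType_iff hψ fun w hw => ?_).symm
      rw [← hδ]
      exact ih hχ (hgood w hw)

end AlternatingTree

theorem kLog2_prodRel_subset {A B : Type} {k₁ k₂ : TreeKind} {L : Set (MFormula 2)}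
    (hL : IsNormalLogic L) (hR₁ : trTo 0 '' KLog (treeRel A k₁) ⊆ L)
    (hR₂ : trTo 1 '' KLog (treeRel B k₂) ⊆ L) :
    KLog2 (prodRel1 A B k₁) (prodRel2 A B k₂) ⊆ L := by
  intro φ₀ hφ₀
  by_contra h
  obtain ⟨t₀, ht₀, hφ₀t₀⟩ := exists_isConType_not_mem hL h
  have hroot : IsGoodBlock k₁ k₂ φ₀ L (md φ₀) (lastBlock k₁ k₂ φ₀ L t₀ ([] : List (A ⊕ B))) :=
    ⟨ht₀, le_rfl, fun _ hj => compSat_nil_boxIter hL hR₁ ht₀ hj⟩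
  have hsat := (kSat_iff_mem_nodeType hL hR₁ hR₂ t₀ (mem_sub_self φ₀) hroot).1 (hφ₀ _ [])
  exact hφ₀t₀ (compType_nil hL hR₁ ht₀ ▸ hsat)

namespace PSeq

variable {C : Type}

theorem apply_eq_none_of_st_le (α : PSeq C) {k : ℕ} (hk : α.st ≤ k) : α.1 k = none :=
  Nat.sInf_mem (s := {N | ∀ k ≥ N, α.1 k = none}) α.2 k hk

theorem st_le {α : PSeq C} {N : ℕ} (h : ∀ k ≥ N, α.1 k = none) : α.st ≤ N :=
  Nat.sInf_le h

def window (α : PSeq C) (a n : ℕ) : List C :=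
  ((List.range n).map fun t => α.1 (a + t)).reduceOption

theorem window_add (α : PSeq C) (a m n : ℕ) :
    α.window a (m + n) = α.window a m ++ α.window (a + m) n := by
  simp only [window, List.range_add, List.map_append, List.map_map, List.reduceOption_append]
  congr 3
  funext t
  simp [Function.comp, Nat.add_assoc]

theorem window_eq_nil {α : PSeq C} {a n : ℕ} (h : ∀ t < n, α.1 (a + t) = none) :
    α.window a n = [] := by
  rw [window, List.map_congr_left fun t ht => h t (List.mem_range.1 ht)]
  simp

theorem window_congr {α β : PSeq C} {a n : ℕ} (h : ∀ t < n, α.1 (a + t) = β.1 (a + t)) :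
    α.window a n = β.window a n := by
  simp only [window]
  congr 1
  exact List.map_congr_left fun t ht => h t (List.mem_range.1 ht)

theorem forget_eq_window {α : PSeq C} {N : ℕ} (h : α.st ≤ N) : α.forget = α.window 0 N := by
  obtain ⟨n, rfl⟩ := Nat.exists_eq_add_of_le h
  rw [window_add, window_eq_nil (a := 0 + α.st) fun t _ => α.apply_eq_none_of_st_le (by omega),
    List.append_nil, forget, window]
  simp

theorem forget_eq_append_window {α α' : PSeq C} {a n : ℕ} (hagree : ∀ i < a, α'.1 i = α.1 i)
    (hα : α.st ≤ a) (hα' : α'.st ≤ a + n) : α'.forget = α.forget ++ α'.window a n := by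
  rw [forget_eq_window hα', window_add, forget_eq_window hα, zero_add,
    window_congr fun t ht => hagree _ (by omega)]

def splice (α : PSeq C) (a : ℕ) (w : List C) : PSeq C :=
  ⟨fun i => if i < a then α.1 i else w[i - a]?, a + w.length, fun k hk => by
    simp only [if_neg (show ¬ k < a by omega), List.getElem?_eq_none_iff]
    omega⟩

theorem splice_apply_of_lt (α : PSeq C) (w : List C) {a i : ℕ} (hi : i < a) :
    (α.splice a w).1 i = α.1 i :=
  if_pos hi

theorem st_splice_le (α : PSeq C) (a : ℕ) (w : List C) : (α.splice a w).st ≤ a + w.length :=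
  st_le fun k hk => by
    simp only [splice, if_neg (show ¬ k < a by omega), List.getElem?_eq_none_iff]
    omega

theorem window_splice (α : PSeq C) (a : ℕ) (w : List C) : (α.splice a w).window a w.length = w := by
  have h : (List.range w.length).map (fun t => w[t]?) = w.map some :=
    List.ext_getElem (by simp) fun t _ _ => by simp
  calc (α.splice a w).window a w.length
      = ((List.range w.length).map fun t => w[t]?).reduceOption := by simp [window, splice]
    _ = w := by rw [h]; simp [List.reduceOption]

theorem forget_splice {α : PSeq C} {a : ℕ} (hα : α.st ≤ a) (w : List C) :
    (α.splice a w).forget = α.forget ++ w := by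
  rw [forget_eq_append_window (fun i hi => splice_apply_of_lt α w hi) hα
    (st_splice_le α a w), window_splice]

def zero : PSeq C := ⟨fun _ => none, 0, fun _ _ => rfl⟩

end PSeq

section Interleave

variable {A B : Type}

theorem interleave_apply_two_mul (α : PSeq A) (β : PSeq B) (i : ℕ) :
    (interleave α β).1 (2 * i) = (α.1 i).map .inl := by
  simp [interleave]

theorem interleave_apply_two_mul_add_one (α : PSeq A) (β : PSeq B) (i : ℕ) :
    (interleave α β).1 (2 * i + 1) = (β.1 i).map .inr := by
  simp [interleave, Nat.add_mod, Nat.add_div]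

theorem st_interleave_le {α : PSeq A} {β : PSeq B} {N : ℕ} (hα : α.st ≤ N) (hβ : β.st ≤ N) :
    (interleave α β).st ≤ 2 * N := by
  refine PSeq.st_le fun k hk => ?_
  obtain ⟨i, rfl | rfl⟩ := Nat.even_or_odd' k
  · rw [interleave_apply_two_mul, α.apply_eq_none_of_st_le (by omega), Option.map_none]
  · rw [interleave_apply_two_mul_add_one, β.apply_eq_none_of_st_le (by omega), Option.map_none]

theorem interleave_window_of_right_eq_none (α : PSeq A) {β : PSeq B} {a n : ℕ}
    (hβ : ∀ t < n, β.1 (a + t) = none) :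
    (interleave α β).window (2 * a) (2 * n) = (α.window a n).map .inl := by
  induction n with
  | zero => rfl
  | succ n ih =>
    rw [show 2 * (n + 1) = 2 * n + 2 by ring, PSeq.window_add, PSeq.window_add,
      ih fun t ht => hβ t (by omega), List.map_append]
    congr 1
    rw [show 2 * a + 2 * n = 2 * (a + n) by ring]
    simp only [PSeq.window, List.range_succ, List.range_zero, List.nil_append, List.map_cons,
      List.map_nil, List.singleton_append, add_zero, interleave_apply_two_mul,
      interleave_apply_two_mul_add_one, hβ n (by omega)]
    cases α.1 (a + n) <;> rfl

theorem interleave_window_of_left_eq_none {α : PSeq A} (β : PSeq B) {a n : ℕ}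
    (hα : ∀ t < n, α.1 (a + t) = none) :
    (interleave α β).window (2 * a) (2 * n) = (β.window a n).map .inr := by
  induction n with
  | zero => rfl
  | succ n ih =>
    rw [show 2 * (n + 1) = 2 * n + 2 by ring, PSeq.window_add, PSeq.window_add,
      ih fun t ht => hα t (by omega), List.map_append]
    congr 1
    rw [show 2 * a + 2 * n = 2 * (a + n) by ring]
    simp only [PSeq.window, List.range_succ, List.range_zero, List.nil_append, List.map_cons,
      List.map_nil, List.singleton_append, add_zero, interleave_apply_two_mul,
      interleave_apply_two_mul_add_one, hα n (by omega)]
    cases β.1 (a + n) <;> rfl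

theorem gMap_eq_append_left {α α' : PSeq A} {β : PSeq B} {a n : ℕ}
    (hagree : ∀ i < a, α'.1 i = α.1 i) (hα : α.st ≤ a) (hβ : β.st ≤ a) (hα' : α'.st ≤ a + n) :
    gMap (α', β) = gMap (α, β) ++ (α'.window a n).map .inl := by
  simp only [gMap]
  rw [PSeq.forget_eq_append_window (a := 2 * a) (n := 2 * n) ?_ (st_interleave_le hα hβ) ?_,
    interleave_window_of_right_eq_none _ fun t _ => β.apply_eq_none_of_st_le (by omega)]
  · intro i hi
    obtain ⟨t, rfl | rfl⟩ := Nat.even_or_odd' i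
    · rw [interleave_apply_two_mul, interleave_apply_two_mul, hagree t (by omega)]
    · rw [interleave_apply_two_mul_add_one, interleave_apply_two_mul_add_one]
  · rw [show 2 * a + 2 * n = 2 * (a + n) by ring]
    exact st_interleave_le hα' (by omega)

theorem gMap_eq_append_right {α : PSeq A} {β β' : PSeq B} {a n : ℕ}
    (hagree : ∀ i < a, β'.1 i = β.1 i) (hα : α.st ≤ a) (hβ : β.st ≤ a) (hβ' : β'.st ≤ a + n) :
    gMap (α, β') = gMap (α, β) ++ (β'.window a n).map .inr := by
  simp only [gMap]
  rw [PSeq.forget_eq_append_window (a := 2 * a) (n := 2 * n) ?_ (st_interleave_le hα hβ) ?_,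
    interleave_window_of_left_eq_none _ fun t _ => α.apply_eq_none_of_st_le (by omega)]
  · intro i hi
    obtain ⟨t, rfl | rfl⟩ := Nat.even_or_odd' i
    · rw [interleave_apply_two_mul, interleave_apply_two_mul]
    · rw [interleave_apply_two_mul_add_one, interleave_apply_two_mul_add_one, hagree t (by omega)]
  · rw [show 2 * a + 2 * n = 2 * (a + n) by ring]
    exact st_interleave_le (by omega) hβ'

theorem gMap_splice_left {α : PSeq A} {β : PSeq B} {a : ℕ} (hα : α.st ≤ a) (hβ : β.st ≤ a)
    (w : List A) : gMap (α.splice a w, β) = gMap (α, β) ++ w.map .inl := by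
  rw [gMap_eq_append_left (fun i hi => α.splice_apply_of_lt w hi) hα hβ (α.st_splice_le a w),
    PSeq.window_splice]

theorem gMap_splice_right {α : PSeq A} {β : PSeq B} {a : ℕ} (hα : α.st ≤ a) (hβ : β.st ≤ a)
    (w : List B) : gMap (α, β.splice a w) = gMap (α, β) ++ w.map .inr := by
  rw [gMap_eq_append_right (fun i hi => β.splice_apply_of_lt w hi) hα hβ (β.st_splice_le a w),
    PSeq.window_splice]

theorem gMap_zero : gMap ((PSeq.zero, PSeq.zero) : PSeq A × PSeq B) = [] := by
  rw [gMap, PSeq.forget_eq_window (st_interleave_le (N := 0) (PSeq.st_le fun _ _ => rfl)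
    (PSeq.st_le fun _ _ => rfl))]
  rfl

theorem gMap_surjective : Function.Surjective (gMap : PSeq A × PSeq B → List (A ⊕ B)) := by
  intro u
  induction u using List.reverseRecOn with
  | nil => exact ⟨_, gMap_zero⟩
  | append_singleton u c ih =>
    obtain ⟨⟨α, β⟩, rfl⟩ := ih
    cases c with
    | inl a => exact ⟨_, gMap_splice_left (le_max_left α.st β.st) (le_max_right _ _) [a]⟩
    | inr b => exact ⟨_, gMap_splice_right (le_max_left α.st β.st) (le_max_right _ _) [b]⟩

end Interleave

theorem unbhd_anti {C : Type} (R : List C → List C → Prop) (α : PSeq C) {k k' : ℕ}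
    (h : k ≤ k') : Unbhd R k' α ⊆ Unbhd R k α :=
  fun _ hβ => ⟨fun i hi => hβ.1 i (lt_of_lt_of_le hi (max_le_max h le_rfl)), hβ.2⟩

theorem mem_nOmega_iff {C : Type} (R : List C → List C → Prop) (α : PSeq C) (s : Set (PSeq C)) :
    s ∈ nOmega R α ↔ ∃ k, Unbhd R k α ⊆ s := by
  rw [nOmega, (Filter.hasBasis_iInf_principal
    (directed_of_isDirected_le fun _ _ h => unbhd_anti R α h)).mem_iff]
  simp

section BoundedMorphism

variable {A B : Type}

theorem preimage_gMap_mem_prodTau1_iff (k : TreeKind) (P : List (A ⊕ B) → Prop) (α : PSeq A)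
    (β : PSeq B) :
    {q | P (gMap q)} ∈ prodTau1 (nOmega (treeRel A k)) (α, β) ↔
      ∀ y, prodRel1 A B k (gMap (α, β)) y → P y := by
  rw [prodTau1, Filter.mem_map, mem_nOmega_iff, forall_prodRel1_iff]
  constructor
  · rintro ⟨k', hk'⟩ w hw
    have hsplice : α.splice (max k' (max α.st β.st)) w ∈ Unbhd (treeRel A k) k' α := by
      refine ⟨fun i hi => (α.splice_apply_of_lt w (by omega)).symm, ?_⟩
      rw [PSeq.forget_splice (by omega), treeRel_append_iff]
      exact hw
    simpa [gMap_splice_left (α := α) (β := β) (a := max k' (max α.st β.st)) (by omega)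
      (by omega)] using hk' hsplice
  · intro h
    refine ⟨β.st, fun α' ⟨hagree, hrel⟩ => ?_⟩
    have hagree' : ∀ i < max β.st α.st, α'.1 i = α.1 i := fun i hi => (hagree i hi).symm
    rw [PSeq.forget_eq_append_window hagree' (le_max_right _ _) (by omega : α'.st ≤ _ + α'.st),
      treeRel_append_iff] at hrel
    have := h _ hrel
    rwa [← gMap_eq_append_left hagree' (le_max_right _ _) (le_max_left _ _) (by omega)] at this

theorem preimage_gMap_mem_prodTau2_iff (k : TreeKind) (P : List (A ⊕ B) → Prop) (α : PSeq A)
    (β : PSeq B) :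
    {q | P (gMap q)} ∈ prodTau2 (nOmega (treeRel B k)) (α, β) ↔
      ∀ y, prodRel2 A B k (gMap (α, β)) y → P y := by
  rw [prodTau2, Filter.mem_map, mem_nOmega_iff, forall_prodRel2_iff]
  constructor
  · rintro ⟨k', hk'⟩ w hw
    have hsplice : β.splice (max k' (max α.st β.st)) w ∈ Unbhd (treeRel B k) k' β := by
      refine ⟨fun i hi => (β.splice_apply_of_lt w (by omega)).symm, ?_⟩
      rw [PSeq.forget_splice (by omega), treeRel_append_iff]
      exact hw
    simpa [gMap_splice_right (α := α) (β := β) (a := max k' (max α.st β.st)) (by omega)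
      (by omega)] using hk' hsplice
  · intro h
    refine ⟨α.st, fun β' ⟨hagree, hrel⟩ => ?_⟩
    have hagree' : ∀ i < max α.st β.st, β'.1 i = β.1 i := fun i hi => (hagree i hi).symm
    rw [PSeq.forget_eq_append_window hagree' (le_max_right _ _) (by omega : β'.st ≤ _ + β'.st),
      treeRel_append_iff] at hrel
    have := h _ hrel
    rwa [← gMap_eq_append_right hagree' (le_max_left _ _) (le_max_right _ _) (by omega)] at this

theorem preimage_gMap_mem_iff (k₁ k₂ : TreeKind) (i : Fin 2) (q : PSeq A × PSeq B)
    (P : List (A ⊕ B) → Prop) :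
    {q' | P (gMap q')} ∈ ![prodTau1 (nOmega (treeRel A k₁)), prodTau2 (nOmega (treeRel B k₂))] i q ↔
      ∀ y, ![prodRel1 A B k₁, prodRel2 A B k₂] i (gMap q) y → P y := by
  obtain rfl | rfl := Fin.exists_fin_two.1 ⟨i, rfl⟩
  · exact preimage_gMap_mem_prodTau1_iff k₁ P q.1 q.2
  · exact preimage_gMap_mem_prodTau2_iff k₂ P q.1 q.2

end BoundedMorphism

theorem nLog2_prod_subset_kLog2 (A B : Type) (k₁ k₂ : TreeKind) :
    NLog2 (prodTau1 (nOmega (treeRel A k₁))) (prodTau2 (nOmega (treeRel B k₂))) ⊆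
      KLog2 (prodRel1 A B k₁) (prodRel2 A B k₂) := by
  intro φ hφ V u
  obtain ⟨q, rfl⟩ := gMap_surjective u
  exact (nSat_comap_iff (preimage_gMap_mem_iff k₁ k₂) V φ q).1 (hφ _ q)

theorem log_nOmega_prod_subset_general (A B : Type)
    (k₁ k₂ : TreeKind) :
    NLog2 (prodTau1 (nOmega (treeRel A k₁))) (prodTau2 (nOmega (treeRel B k₂)))
      ⊆ Fusion (KLog (treeRel A k₁)) (KLog (treeRel B k₂)) :=
  (nLog2_prod_subset_kLog2 A B k₁ k₂).trans <| kLog2_prodRel_subset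
    (isNormalLogic_normalClosure _) (fun _ h => subset_normalClosure _ (.inl h))
    (fun _ h => subset_normalClosure _ (.inr h))

/-- `Log(N_ω(F₁) × N_ω(F₂)) ⊆ Log(F₁) ⊗ Log(F₂)`. -/
theorem log_nOmega_prod_subset (A B : Type) [Nonempty A] [Nonempty B]
    (k₁ k₂ : TreeKind) :
    NLog2 (prodTau1 (nOmega (treeRel A k₁))) (prodTau2 (nOmega (treeRel B k₂)))
      ⊆ Fusion (KLog (treeRel A k₁)) (KLog (treeRel B k₂)) :=
  log_nOmega_prod_subset_general A B k₁ k₂
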